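/- arXiv:2501.05746 — 6 statements merged into one kernel-verified Lean document; each statement's English description precedes it below -/
import Mathlib

section
/- Let A and v be positive reals with 1/3 ≤ A ≤ 1. Then the minimum of v²(A(i+j)² + (j+k)² + (i+k)²) over all integer triples (i,j,k) ≠ (0,0,0) equals (A+1)v². -/
private lemma sq_ge_one {n : ℤ} (hn : n ≠ 0) : (1:ℝ) ≤ (n:ℝ)^2 := by
  have h : (1:ℤ) ≤ n^2 := by rcases hn.lt_or_gt with h|h <;> nlinarith
  exact_mod_cast h

private lemma sq_ge_four {n : ℤ} (hn : n ≠ 0) (he : Even n) : (4:ℝ) ≤ (n:ℝ)^2 := by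
  obtain ⟨m, rfl⟩ := he
  have hm : m ≠ 0 := by omega
  have h : (4:ℤ) ≤ (m+m)^2 := by
    have : (1:ℤ) ≤ m^2 := by rcases hm.lt_or_gt with h|h <;> nlinarith
    nlinarith
  exact_mod_cast h

private lemma key_ineq (A : ℝ) (hA1 : 1/3 ≤ A) (hA2 : A ≤ 1) (a b c : ℤ)
    (h0 : ¬(a = 0 ∧ b = 0 ∧ c = 0)) (hpar : Even (a + b + c)) :
    A + 1 ≤ A * (a:ℝ)^2 + (b:ℝ)^2 + (c:ℝ)^2 := by
  have hA0 : (0:ℝ) < A := by linarith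
  by_cases ha : a = 0
  · subst ha
    by_cases hb : b = 0
    · subst hb
      have hc : c ≠ 0 := by tauto
      have h4 : (4:ℝ) ≤ (c:ℝ)^2 := sq_ge_four hc (by simpa using hpar)
      push_cast
      nlinarith
    · by_cases hc : c = 0
      · subst hc
        have h4 : (4:ℝ) ≤ (b:ℝ)^2 := sq_ge_four hb (by simpa using hpar)
        push_cast
        nlinarith
      · have h1 := sq_ge_one hb
        have h2 := sq_ge_one hc
        nlinarith
  · by_cases hb : b = 0
    · by_cases hc : c = 0
      · subst hb; subst hc
        have h4 : (4:ℝ) ≤ (a:ℝ)^2 := sq_ge_four ha (by simpa using hpar)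
        push_cast
        nlinarith
      · have h1 := sq_ge_one ha
        have h2 := sq_ge_one hc
        nlinarith [sq_nonneg (b:ℝ)]
    · have h1 := sq_ge_one ha
      have h2 := sq_ge_one hb
      nlinarith [sq_nonneg (c:ℝ)]

/-- For positive reals `A, v` with `1/3 ≤ A ≤ 1`, the minimum of
`v²(A(i+j)² + (j+k)² + (i+k)²)` over nonzero integer triples equals `(A+1)v²`. -/
theorem cuboidal_min_norm_middle (A v : ℝ) (hA0 : 0 < A) (hv : 0 < v)
    (hA1 : 1/3 ≤ A) (hA2 : A ≤ 1) :
    IsLeast {x : ℝ | ∃ i j k : ℤ, (i, j, k) ≠ (0, 0, 0) ∧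
      x = v^2 * (A * ((i : ℝ) + (j : ℝ))^2 + ((j : ℝ) + (k : ℝ))^2 + ((i : ℝ) + (k : ℝ))^2)}
      ((A + 1) * v^2) := by
  constructor
  · exact ⟨1, 0, 0, by simp, by push_cast; ring⟩
  · rintro x ⟨i, j, k, hne, rfl⟩
    have h0 : ¬((i + j) = 0 ∧ (j + k) = 0 ∧ (i + k) = 0) := by
      intro ⟨h1, h2, h3⟩
      apply hne
      have : i = 0 ∧ j = 0 ∧ k = 0 := by omega
      simp [this.1, this.2.1, this.2.2]
    have hpar : Even ((i + j) + (j + k) + (i + k)) := ⟨i + j + k, by ring⟩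
    have hk := key_ineq A hA1 hA2 (i+j) (j+k) (i+k) h0 hpar
    push_cast at hk
    have hv2 : (0:ℝ) < v^2 := by positivity
    nlinarith [hk]
end

section
/- Let A and v be positive reals with 0 < A < 1/3. Then the minimum of v²(A(i+j)² + (j+k)² + (i+k)²) over all integer triples (i,j,k) ≠ (0,0,0) equals 4Av². -/
lemma int_one_le_sq {n : ℤ} (h : n ≠ 0) : 1 ≤ n^2 := by
  rcases h.lt_or_gt with h | h <;> nlinarith

/-- For positive reals `A, v` with `0 < A < 1/3`, the minimum of
`v²(A(i+j)² + (j+k)² + (i+k)²)` over nonzero integer triples equals `4Av²`. -/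
theorem cuboidal_min_norm_low (A v : ℝ) (hA0 : 0 < A) (hv : 0 < v) (hA1 : A < 1/3) :
    IsLeast {x : ℝ | ∃ i j k : ℤ, (i, j, k) ≠ (0, 0, 0) ∧
      x = v^2 * (A * ((i : ℝ) + (j : ℝ))^2 + ((j : ℝ) + (k : ℝ))^2 + ((i : ℝ) + (k : ℝ))^2)}
      (4 * A * v^2) := by
  constructor
  · exact ⟨1, 1, -1, by decide, by push_cast; ring⟩
  · rintro x ⟨i, j, k, hne, rfl⟩
    simp only [ne_eq, Prod.mk.injEq, not_and] at hne
    have hv2 : (0:ℝ) < v^2 := by positivity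
    rw [show 4*A*v^2 = v^2*(4*A) by ring]
    apply mul_le_mul_of_nonneg_left _ hv2.le
    by_cases hb : j + k = 0 ∧ i + k = 0
    · obtain ⟨hb1, hb2⟩ := hb
      have hi0 : i ≠ 0 := by
        intro h; exact hne h (by omega) (by omega)
      have h1 : (1:ℝ) ≤ (i:ℝ)^2 := by exact_mod_cast int_one_le_sq hi0
      have hj : (j:ℝ) = (i:ℝ) := by exact_mod_cast congrArg Int.cast (show j = i by omega)
      have hk : (k:ℝ) = -(i:ℝ) := by
        have : k = -i := by omega
        rw [this]; push_cast; ring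
      rw [hj, hk]
      nlinarith
    · have h1 : 1 ≤ (j+k)^2 + (i+k)^2 := by
        by_cases hjk : j + k = 0
        · have : i + k ≠ 0 := fun h => hb ⟨hjk, h⟩
          nlinarith [int_one_le_sq this, sq_nonneg (j+k)]
        · nlinarith [int_one_le_sq hjk, sq_nonneg (i+k)]
      by_cases h2 : 2 ≤ (j+k)^2 + (i+k)^2
      · have h2' : (2:ℝ) ≤ ((j:ℝ)+k)^2 + ((i:ℝ)+k)^2 := by exact_mod_cast h2
        nlinarith [sq_nonneg ((i:ℝ)+j)]
      · have heq : (j+k)^2 + (i+k)^2 = 1 := le_antisymm (by omega) h1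
        have ha : i + j ≠ 0 := by
          intro ha0
          have hj : j = -i := by omega
          rw [hj] at heq
          have hs : 2*(i^2 + k^2) = 1 := by nlinarith [heq]
          obtain ⟨s, hs'⟩ : ∃ s, i^2 + k^2 = s := ⟨_, rfl⟩
          rw [hs'] at hs; omega
        have ha2 : (1:ℝ) ≤ ((i:ℝ)+j)^2 := by exact_mod_cast int_one_le_sq ha
        have heq' : ((j:ℝ)+k)^2 + ((i:ℝ)+k)^2 = 1 := by exact_mod_cast heq
        nlinarith
end

section
/- Let A and v be positive reals with A > 1. Then the minimum of v²(A(i+j)² + (j+k)² + (i+k)²) over all integer triples (i,j,k) ≠ (0,0,0) equals 2v². -/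
lemma cuboidal_key (i j k : ℤ) (h : ¬(i = 0 ∧ j = 0 ∧ k = 0)) :
    2 ≤ (i+j)^2 + (j+k)^2 + (i+k)^2 := by
  have hne : i ≠ 0 ∨ j ≠ 0 ∨ k ≠ 0 := by tauto
  have h2 : 1 ≤ (i+j+k)^2 + (i^2+j^2+k^2) := by
    rcases hne with hi | hj | hk
    · have : 0 < i^2 := by positivity
      nlinarith [sq_nonneg (i+j+k), sq_nonneg j, sq_nonneg k]
    · have : 0 < j^2 := by positivity
      nlinarith [sq_nonneg (i+j+k), sq_nonneg i, sq_nonneg k]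
    · have : 0 < k^2 := by positivity
      nlinarith [sq_nonneg (i+j+k), sq_nonneg i, sq_nonneg j]
  have h3 : (i+j+k)^2 + (i^2+j^2+k^2) = 2*(i^2+j^2+k^2+i*j+j*k+i*k) := by ring
  have h4 : (i+j)^2 + (j+k)^2 + (i+k)^2 = 2*(i^2+j^2+k^2+i*j+j*k+i*k) := by ring
  set n := i^2+j^2+k^2+i*j+j*k+i*k with hn
  omega

/-- For positive reals `A, v` with `A > 1`, the minimum of
`v²(A(i+j)² + (j+k)² + (i+k)²)` over nonzero integer triples equals `2v²`. -/
theorem cuboidal_min_norm_high (A v : ℝ) (hA0 : 0 < A) (hv : 0 < v) (hA1 : 1 < A) :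
    IsLeast {x : ℝ | ∃ i j k : ℤ, (i, j, k) ≠ (0, 0, 0) ∧
      x = v^2 * (A * ((i : ℝ) + (j : ℝ))^2 + ((j : ℝ) + (k : ℝ))^2 + ((i : ℝ) + (k : ℝ))^2)}
      (2 * v^2) := by
  constructor
  · refine ⟨1, -1, 0, by decide, ?_⟩
    push_cast
    ring
  · rintro x ⟨i, j, k, hne, rfl⟩
    have h0 : ¬(i = 0 ∧ j = 0 ∧ k = 0) := by
      intro ⟨h1, h2, h3⟩; exact hne (by simp [h1, h2, h3])
    have hk := cuboidal_key i j k h0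
    have hkr : (2:ℝ) ≤ ((i:ℝ)+j)^2 + ((j:ℝ)+k)^2 + ((i:ℝ)+k)^2 := by exact_mod_cast hk
    have h1 : 0 ≤ v^2 * (((i:ℝ)+j)^2 + ((j:ℝ)+k)^2 + ((i:ℝ)+k)^2 - 2) :=
      mul_nonneg (sq_nonneg v) (by linarith)
    have h2 : 0 ≤ v^2 * ((A-1) * ((i:ℝ)+j)^2) :=
      mul_nonneg (sq_nonneg v) (mul_nonneg (by linarith) (sq_nonneg _))
    nlinarith [h1, h2]
end

section
/- Fix a real s > 3/2. For every real A with 1/3 < A < 1, the function A ↦ L(A;s) is differentiable and its derivative equals (2s/(A+1)²)·Σ'_{i,j,k∈ℤ} (ij + ik − 2jk)/(i² + j² + k² − 2(ij+ik)·A/(A+1) + 2jk·(A−1)/(A+1))^{s+1}, where the sum omits (i,j,k) = (0,0,0). -/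
/-- The quadratic form `g(A;i,j,k) = (A(i+j)² + (j+k)² + (i+k)²)/(A+1)`. -/
noncomputable def cuboidalG (A : ℝ) (p : ℤ × ℤ × ℤ) : ℝ :=
  (A * ((p.1 : ℝ) + (p.2.1 : ℝ))^2 + ((p.2.1 : ℝ) + (p.2.2 : ℝ))^2 +
    ((p.1 : ℝ) + (p.2.2 : ℝ))^2) / (A + 1)

/-- The Epstein zeta function `L(A;s) = Σ'_{(i,j,k)≠(0,0,0)} g(A;i,j,k)^{-s}`. -/
noncomputable def epsteinL (A s : ℝ) : ℝ :=
  ∑' p : {p : ℤ × ℤ × ℤ // p ≠ 0}, (cuboidalG A p.1) ^ (-s)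

/-!
The substitution `(i, j, k) ↦ (i - j, -k, j)` turns `g(A; ·)` into the quadratic form
`q_A(i, j, k) = i² + j² + k² - 2(ij + ik)·A/(A+1) + 2jk·(A-1)/(A+1)` of the claimed formula, and
`∂q_A/∂A = -2(ij + ik - 2jk)/(A+1)²`. For `1/3 ≤ A ≤ 1` one has `i² + j² + k² ≤ 8 q_A`, so the
termwise derivatives of `Σ' q_A^{-s}` are bounded, uniformly in `A`, by a multiple of
`(1 + i² + j² + k²)^{-s}`. This series converges for `s > 3/2`, being dominated by the product of
the one-dimensional series `Σ (1 + x²)^{-s/3}`; hence `L(·; s)` may be differentiated term by term.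
-/

theorem summable_one_add_int_sq_rpow_neg {t : ℝ} (ht : 1 / 2 < t) :
    Summable fun n : ℤ => (1 + (n : ℝ) ^ 2) ^ (-t) := by
  refine (Real.summable_abs_int_rpow (b := 2 * t) (by linarith)).of_norm_bounded_eventually ?_
  filter_upwards [Filter.eventually_cofinite_ne 0] with n hn
  have hn' : 0 < |(n : ℝ)| := abs_pos.mpr (Int.cast_ne_zero.mpr hn)
  rw [Real.norm_of_nonneg (by positivity), neg_mul_eq_mul_neg, Real.rpow_mul hn'.le,
    Real.rpow_two, sq_abs]
  exact Real.rpow_le_rpow_of_nonpos (by positivity) (by linarith) (by linarith)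

namespace Cuboidal

def normSq (p : ℤ × ℤ × ℤ) : ℝ := (p.1 : ℝ) ^ 2 + (p.2.1 : ℝ) ^ 2 + (p.2.2 : ℝ) ^ 2

noncomputable def form (A : ℝ) (p : ℤ × ℤ × ℤ) : ℝ :=
  (p.1 : ℝ) ^ 2 + (p.2.1 : ℝ) ^ 2 + (p.2.2 : ℝ) ^ 2
    - 2 * ((p.1 : ℝ) * (p.2.1 : ℝ) + (p.1 : ℝ) * (p.2.2 : ℝ)) * (A / (A + 1))
    + 2 * (p.2.1 : ℝ) * (p.2.2 : ℝ) * ((A - 1) / (A + 1))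

def coeff (p : ℤ × ℤ × ℤ) : ℤ := p.1 * p.2.1 + p.1 * p.2.2 - 2 * p.2.1 * p.2.2

def shear : (ℤ × ℤ × ℤ) ≃+ (ℤ × ℤ × ℤ) where
  toFun p := (p.1 - p.2.1, -p.2.2, p.2.1)
  invFun q := (q.1 + q.2.2, q.2.2, -q.2.1)
  left_inv p := by simp
  right_inv q := by simp
  map_add' p q := by ext <;> simp only [Prod.fst_add, Prod.snd_add] <;> ring

theorem cuboidalG_shear {A : ℝ} (hA : A + 1 ≠ 0) (p : ℤ × ℤ × ℤ) :
    cuboidalG A (shear p) = form A p := by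
  simp only [cuboidalG, form, shear, AddEquiv.coe_mk, Equiv.coe_fn_mk]
  push_cast
  field_simp
  ring

theorem epsteinL_eq_tsum_form {A : ℝ} (hA : A + 1 ≠ 0) (s : ℝ) :
    epsteinL A s = ∑' p : {p : ℤ × ℤ × ℤ // p ≠ 0}, form A p ^ (-s) := by
  rw [epsteinL, ← (shear.toEquiv.subtypeEquiv
    fun p => (map_ne_zero_iff shear shear.injective).symm).tsum_eq]
  simp [cuboidalG_shear hA]

theorem hasDerivAt_form (p : ℤ × ℤ × ℤ) {A : ℝ} (hA : A + 1 ≠ 0) :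
    HasDerivAt (fun B => form B p) (-2 * coeff p / (A + 1) ^ 2) A := by
  obtain ⟨i, j, k⟩ := p
  have h₁ : HasDerivAt (fun B : ℝ => B / (B + 1)) (1 / (A + 1) ^ 2) A :=
    ((hasDerivAt_id' A).div ((hasDerivAt_id' A).add_const 1) hA).congr_deriv (by ring)
  have h₂ : HasDerivAt (fun B : ℝ => (B - 1) / (B + 1)) (2 / (A + 1) ^ 2) A :=
    (((hasDerivAt_id' A).sub_const 1).div ((hasDerivAt_id' A).add_const 1) hA).congr_deriv
      (by ring)
  refine (((h₁.const_mul (2 * ((i : ℝ) * j + i * k))).const_sub ((i : ℝ) ^ 2 + j ^ 2 + k ^ 2)).add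
    (h₂.const_mul (2 * (j : ℝ) * k))).congr_deriv ?_
  simp only [coeff]
  push_cast
  ring

theorem hasDerivAt_form_rpow_neg (p : ℤ × ℤ × ℤ) (s : ℝ) {A : ℝ} (hA : A + 1 ≠ 0)
    (hpos : 0 < form A p) :
    HasDerivAt (fun B => form B p ^ (-s))
      (2 * s / (A + 1) ^ 2 * (coeff p / form A p ^ (s + 1))) A := by
  convert (hasDerivAt_form p hA).rpow_const (p := -s) (Or.inl hpos.ne') using 1
  rw [show -s - 1 = -(s + 1) by ring, Real.rpow_neg hpos.le]
  ring

theorem normSq_nonneg (p : ℤ × ℤ × ℤ) : 0 ≤ normSq p := by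
  simp only [normSq]
  positivity

theorem normSq_le_form {B : ℝ} (hB₁ : 1 / 3 ≤ B) (hB₂ : B ≤ 1) (p : ℤ × ℤ × ℤ) :
    normSq p ≤ 8 * form B p := by
  obtain ⟨i, j, k⟩ := p
  have hB₀ : 0 ≤ B := by linarith
  have hform : form B (i, j, k) = (B * (i - j - k) ^ 2 + (j - k) ^ 2 + i ^ 2) / (B + 1) := by
    simp only [form]
    field_simp
    ring
  have hF : normSq (i, j, k) ≤ 2 * ((i - j - k) ^ 2 + (j - k) ^ 2 + i ^ 2) := by
    simp only [normSq]
    nlinarith [sq_nonneg (3 * (i : ℝ) - 2 * j - 2 * k), sq_nonneg ((j : ℝ) - k)]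
  rw [hform, mul_div_assoc', le_div_iff₀ (by linarith)]
  nlinarith [mul_le_mul_of_nonneg_left hF hB₀, mul_nonneg (by linarith : 0 ≤ 1 - B)
    (add_nonneg (sq_nonneg ((j : ℝ) - k)) (sq_nonneg (i : ℝ))),
    mul_nonneg (by linarith : 0 ≤ 3 * B - 1) (normSq_nonneg (i, j, k))]

theorem one_le_normSq {p : ℤ × ℤ × ℤ} (hp : p ≠ 0) : 1 ≤ normSq p := by
  obtain ⟨i, j, k⟩ := p
  have key : (1 : ℤ) ≤ i ^ 2 + j ^ 2 + k ^ 2 := by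
    by_contra! h
    obtain ⟨rfl, rfl, rfl⟩ : i = 0 ∧ j = 0 ∧ k = 0 := by
      refine ⟨?_, ?_, ?_⟩ <;> nlinarith [sq_nonneg i, sq_nonneg j, sq_nonneg k]
    exact hp rfl
  simp only [normSq]
  exact_mod_cast key

theorem abs_coeff_le_two_mul_normSq (p : ℤ × ℤ × ℤ) : |(coeff p : ℝ)| ≤ 2 * normSq p := by
  obtain ⟨i, j, k⟩ := p
  simp only [coeff, normSq]
  push_cast
  rw [abs_le]
  constructor <;> nlinarith [sq_nonneg ((i : ℝ) - j), sq_nonneg ((i : ℝ) - k),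
    sq_nonneg ((j : ℝ) - k), sq_nonneg ((i : ℝ) + j), sq_nonneg ((i : ℝ) + k),
    sq_nonneg ((j : ℝ) + k)]

theorem summable_one_add_normSq_rpow_neg {s : ℝ} (hs : 3 / 2 < s) :
    Summable fun p : ℤ × ℤ × ℤ => (1 + normSq p) ^ (-s) := by
  set f : ℤ → ℝ := fun n => (1 + (n : ℝ) ^ 2) ^ (-(s / 3))
  have hf : Summable f := summable_one_add_int_sq_rpow_neg (by linarith)
  have hf₀ : 0 ≤ f := fun n => by positivity
  refine .of_nonneg_of_le (fun p => by have := normSq_nonneg p; positivity) (fun p => ?_)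
    (hf.mul_of_nonneg (hf.mul_of_nonneg hf hf₀ hf₀) hf₀ fun _ => by positivity)
  obtain ⟨i, j, k⟩ := p
  have hN : 0 < 1 + normSq (i, j, k) := by linarith [normSq_nonneg (i, j, k)]
  have hle (x : ℤ) (hx : (x : ℝ) ^ 2 ≤ normSq (i, j, k)) :
      (1 + normSq (i, j, k)) ^ (-(s / 3)) ≤ f x :=
    Real.rpow_le_rpow_of_nonpos (by positivity) (by linarith) (by linarith)
  calc (1 + normSq (i, j, k)) ^ (-s) = (1 + normSq (i, j, k)) ^ (-(s / 3)) *
        ((1 + normSq (i, j, k)) ^ (-(s / 3)) * (1 + normSq (i, j, k)) ^ (-(s / 3))) := by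
        rw [← Real.rpow_add hN, ← Real.rpow_add hN]
        ring_nf
    _ ≤ f i * (f j * f k) := by
        gcongr <;> apply hle <;> simp only [normSq] <;> nlinarith [sq_nonneg (i : ℝ),
          sq_nonneg (j : ℝ), sq_nonneg (k : ℝ)]

section Bounds

variable {B : ℝ} {p : ℤ × ℤ × ℤ}

theorem form_pos (hB₁ : 1 / 3 ≤ B) (hB₂ : B ≤ 1) (hp : p ≠ 0) : 0 < form B p := by
  linarith [normSq_le_form hB₁ hB₂ p, one_le_normSq hp]

theorem form_rpow_neg_le (hB₁ : 1 / 3 ≤ B) (hB₂ : B ≤ 1) (hp : p ≠ 0) {s : ℝ} (hs : 0 ≤ s) :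
    form B p ^ (-s) ≤ 16 ^ s * (1 + normSq p) ^ (-s) := by
  have hN : 0 < 1 + normSq p := by linarith [normSq_nonneg p]
  calc form B p ^ (-s) ≤ ((1 + normSq p) / 16) ^ (-s) :=
        Real.rpow_le_rpow_of_nonpos (by positivity)
          (by linarith [normSq_le_form hB₁ hB₂ p, one_le_normSq hp]) (by linarith)
    _ = 16 ^ s * (1 + normSq p) ^ (-s) := by
        rw [Real.div_rpow hN.le (by norm_num), Real.rpow_neg (by norm_num : (0 : ℝ) ≤ 16),
          div_eq_mul_inv, inv_inv, mul_comm]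

theorem norm_deriv_form_rpow_neg_le (hB₁ : 1 / 3 ≤ B) (hB₂ : B ≤ 1) (hp : p ≠ 0) {s : ℝ}
    (hs : 0 ≤ s) :
    ‖2 * s / (B + 1) ^ 2 * (coeff p / form B p ^ (s + 1))‖ ≤
      32 * s * 16 ^ s * (1 + normSq p) ^ (-s) := by
  have hq := form_pos hB₁ hB₂ hp
  have hcoeff : |(coeff p : ℝ)| ≤ 16 * form B p := by
    linarith [abs_coeff_le_two_mul_normSq p, normSq_le_form hB₁ hB₂ p]
  have hfactor : 2 * s / (B + 1) ^ 2 ≤ 2 * s := div_le_self (by positivity) (by nlinarith)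
  have hratio : |(coeff p : ℝ) / form B p ^ (s + 1)| ≤ 16 * form B p ^ (-s) := by
    have hqs : 0 < form B p ^ s := by positivity
    rw [abs_div, abs_of_pos (by positivity : 0 < form B p ^ (s + 1)), Real.rpow_add_one hq.ne',
      Real.rpow_neg hq.le, div_le_iff₀ (by positivity), mul_assoc, inv_mul_cancel_left₀ hqs.ne']
    exact hcoeff
  calc ‖2 * s / (B + 1) ^ 2 * (coeff p / form B p ^ (s + 1))‖
      = 2 * s / (B + 1) ^ 2 * |(coeff p : ℝ) / form B p ^ (s + 1)| := by
        rw [Real.norm_eq_abs, abs_mul, abs_of_nonneg (by positivity)]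
    _ ≤ 2 * s * (16 * (16 ^ s * (1 + normSq p) ^ (-s))) := by
        gcongr
        exact hratio.trans (by gcongr; exact form_rpow_neg_le hB₁ hB₂ hp hs)
    _ = 32 * s * 16 ^ s * (1 + normSq p) ^ (-s) := by ring

theorem summable_form_rpow_neg (hB₁ : 1 / 3 ≤ B) (hB₂ : B ≤ 1) {s : ℝ} (hs : 3 / 2 < s) :
    Summable fun p : {p : ℤ × ℤ × ℤ // p ≠ 0} => form B p ^ (-s) :=
  .of_nonneg_of_le (fun p => Real.rpow_nonneg (form_pos hB₁ hB₂ p.2).le _)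
    (fun p => form_rpow_neg_le hB₁ hB₂ p.2 (by linarith))
    (((summable_one_add_normSq_rpow_neg hs).comp_injective Subtype.val_injective).mul_left _)

end Bounds

end Cuboidal

open Cuboidal in
/-- For fixed `s > 3/2` and every `A` with `1/3 < A < 1`, the function
`A ↦ L(A;s)` is differentiable with derivative
`(2s/(A+1)²)·Σ' (ij+ik−2jk)/(i²+j²+k²−2(ij+ik)·A/(A+1)+2jk·(A−1)/(A+1))^{s+1}`. -/
theorem epsteinL_hasDerivAt (s : ℝ) (hs : s > 3/2) (A : ℝ) (hA1 : 1/3 < A) (hA2 : A < 1) :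
    HasDerivAt (fun B : ℝ => epsteinL B s)
      (2 * s / (A + 1)^2 * ∑' p : {p : ℤ × ℤ × ℤ // p ≠ 0},
        ((p.1.1 * p.1.2.1 + p.1.1 * p.1.2.2 - 2 * p.1.2.1 * p.1.2.2 : ℤ) : ℝ) /
          ((p.1.1 : ℝ)^2 + (p.1.2.1 : ℝ)^2 + (p.1.2.2 : ℝ)^2
            - 2 * ((p.1.1 : ℝ) * (p.1.2.1 : ℝ) + (p.1.1 : ℝ) * (p.1.2.2 : ℝ)) * (A / (A + 1))
            + 2 * (p.1.2.1 : ℝ) * (p.1.2.2 : ℝ) * ((A - 1) / (A + 1))) ^ (s + 1)) A := by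
  have hs₀ : 0 ≤ s := by linarith
  have hA : A ∈ Set.Ioo (1 / 3 : ℝ) 1 := ⟨hA1, hA2⟩
  have hderiv := hasDerivAt_tsum_of_isPreconnected
    (((summable_one_add_normSq_rpow_neg hs).comp_injective Subtype.val_injective).mul_left
      (32 * s * 16 ^ s))
    isOpen_Ioo isPreconnected_Ioo
    (fun p B hB => hasDerivAt_form_rpow_neg p.1 s (by linarith [hB.1])
      (form_pos hB.1.le hB.2.le p.2))
    (fun p B hB => norm_deriv_form_rpow_neg_le hB.1.le hB.2.le p.2 hs₀) hA
    (summable_form_rpow_neg hA1.le hA2.le hs) hA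
  rw [tsum_mul_left] at hderiv
  refine hderiv.congr_of_eventuallyEq ?_
  filter_upwards [Ioo_mem_nhds hA1 hA2] with B hB
  exact epsteinL_eq_tsum_form (by linarith [hB.1]) s
end

section
/- For every real s > 3/2, Σ'_{i,j,k∈ℤ} (ij + ik − 2jk)/(i² + j² + k² − (2/3)(ij + ik + jk))^{s+1} = 0, where the sum is over all integer triples (i,j,k) ≠ (0,0,0). -/
/-!
The form `Q` is invariant under the cyclic rotation `(i, j, k) ↦ (j, k, i)`, while the three
rotations of the numerator `N = ij + ik - 2jk` add up to zero. Since `|N| ≤ 4‖p‖²` and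
`Q ≥ ‖p‖² / 3`, the summand is `O(‖p‖^(-2s))`, which is summable over `ℤ³` for `2s > 3`; so the sum
may be reindexed by the rotation, and three times the sum is the sum of `N/Q^(s+1)` over the three
rotations, which vanishes termwise.
-/

open Finset Module Submodule

theorem tsum_eq_zero_of_sum_perm_pow_eq_zero {α E : Type*} [AddCommMonoid E] [TopologicalSpace E]
    [ContinuousAdd E] [T2Space E] [IsAddTorsionFree E] {f : α → E} (hf : Summable f)
    (σ : Equiv.Perm α) {n : ℕ} (hn : n ≠ 0) (h : ∀ x, ∑ i ∈ range n, f ((σ ^ i) x) = 0) :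
    ∑' x, f x = 0 := by
  have : n • ∑' x, f x = 0 :=
    calc n • ∑' x, f x = ∑ i ∈ range n, ∑' x, f ((σ ^ i) x) := by simp [Equiv.tsum_eq]
      _ = ∑' x, ∑ i ∈ range n, f ((σ ^ i) x) :=
        (Summable.tsum_finsetSum fun i _ ↦ (σ ^ i).summable_iff.mpr hf).symm
      _ = 0 := by simp [h]
  simpa [hn] using this

lemma summable_norm_rpow_intPi {ι : Type*} [Fintype ι] {r : ℝ} (hr : Fintype.card ι < r) :
    Summable fun x : ι → ℤ ↦ ‖x‖ ^ (-r) := by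
  let L := span ℤ (Set.range (Pi.basisFun ℝ ι))
  have hrank : finrank ℤ L = Fintype.card ι := by
    rw [ZLattice.rank ℝ L, finrank_fintype_fun_eq_card]
  let toLattice : (ι → ℤ) → L := fun x ↦ ⟨fun i ↦ x i,
    (Pi.basisFun ℝ ι).mem_span_iff_repr_mem ℤ _ |>.mpr fun i ↦ by simp⟩
  have hinj : Function.Injective toLattice := fun x y h ↦ by
    funext i; simpa [toLattice] using congrFun (congrArg Subtype.val h) i
  refine ((ZLattice.summable_norm_rpow L (-r) (by rw [hrank]; linarith)).comp_injective
    hinj).congr fun x ↦ ?_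
  have hnorm (n : ℤ) : ‖(n : ℝ)‖₊ = ‖n‖₊ := NNReal.eq (Int.norm_cast_real n)
  simp [toLattice, Pi.norm_def, hnorm]

lemma norm_intTriple_eq_pi_norm (x : Fin 3 → ℤ) : ‖(x 0, x 1, x 2)‖ = ‖x‖ := by
  apply le_antisymm
  · simp only [Prod.norm_def, max_le_iff]
    exact ⟨norm_le_pi_norm x 0, norm_le_pi_norm x 1, norm_le_pi_norm x 2⟩
  · refine pi_norm_le_iff_of_nonneg (norm_nonneg _) |>.mpr fun i ↦ ?_
    fin_cases i <;> simp [Prod.norm_def]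

lemma summable_norm_rpow_intTriple {r : ℝ} (hr : 3 < r) :
    Summable fun p : ℤ × ℤ × ℤ ↦ ‖p‖ ^ (-r) := by
  let e : (Fin 3 → ℤ) ≃ ℤ × ℤ × ℤ :=
    { toFun x := (x 0, x 1, x 2)
      invFun p := ![p.1, p.2.1, p.2.2]
      left_inv x := by ext i; fin_cases i <;> rfl
      right_inv p := rfl }
  rw [← e.summable_iff]
  refine (summable_norm_rpow_intPi (ι := Fin 3) (by simpa using hr)).congr fun x ↦ ?_
  rw [← norm_intTriple_eq_pi_norm]
  rfl

def bccNumerator (p : ℤ × ℤ × ℤ) : ℤ := p.1 * p.2.1 + p.1 * p.2.2 - 2 * p.2.1 * p.2.2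

noncomputable def bccForm (p : ℤ × ℤ × ℤ) : ℝ :=
  (p.1 : ℝ)^2 + (p.2.1 : ℝ)^2 + (p.2.2 : ℝ)^2
    - 2/3 * ((p.1 : ℝ) * (p.2.1 : ℝ) + (p.1 : ℝ) * (p.2.2 : ℝ) + (p.2.1 : ℝ) * (p.2.2 : ℝ))

noncomputable def bccSummand (s : ℝ) (p : ℤ × ℤ × ℤ) : ℝ := bccNumerator p / bccForm p ^ (s + 1)

lemma bccSummand_zero (s : ℝ) : bccSummand s 0 = 0 := by
  simp [bccSummand, bccNumerator]

lemma abs_le_norm_intTriple (p : ℤ × ℤ × ℤ) :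
    |(p.1 : ℝ)| ≤ ‖p‖ ∧ |(p.2.1 : ℝ)| ≤ ‖p‖ ∧ |(p.2.2 : ℝ)| ≤ ‖p‖ := by
  simp [Prod.norm_def, Int.norm_eq_abs]

lemma norm_sq_le_three_mul_bccForm (p : ℤ × ℤ × ℤ) : ‖p‖ ^ 2 ≤ 3 * bccForm p := by
  obtain ⟨i, j, k⟩ := p
  have hsq : ‖(i, j, k)‖ ^ 2 ≤ (i : ℝ) ^ 2 + (j : ℝ) ^ 2 + (k : ℝ) ^ 2 := by
    refine (Real.le_sqrt (norm_nonneg _) (by positivity)).mp ?_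
    simp only [Prod.norm_def, Int.norm_eq_abs, max_le_iff]
    refine ⟨Real.abs_le_sqrt ?_, Real.abs_le_sqrt ?_, Real.abs_le_sqrt ?_⟩ <;> nlinarith
  have hform : 3 * bccForm (i, j, k) = (i : ℝ) ^ 2 + (j : ℝ) ^ 2 + (k : ℝ) ^ 2
      + ((i - j : ℝ) ^ 2 + (i - k : ℝ) ^ 2 + (j - k : ℝ) ^ 2) := by
    simp only [bccForm]; ring
  rw [hform]
  nlinarith [sq_nonneg (i - j : ℝ), sq_nonneg (i - k : ℝ), sq_nonneg (j - k : ℝ)]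

lemma abs_bccNumerator_le (p : ℤ × ℤ × ℤ) : |(bccNumerator p : ℝ)| ≤ 4 * ‖p‖ ^ 2 := by
  obtain ⟨hi, hj, hk⟩ := abs_le_norm_intTriple p
  obtain ⟨i, j, k⟩ := p
  calc |(bccNumerator (i, j, k) : ℝ)|
      ≤ |(i : ℝ) * j| + |(i : ℝ) * k| + |2 * (j : ℝ) * k| := by
        push_cast [bccNumerator]
        exact (abs_sub _ _).trans (add_le_add_left (abs_add_le _ _) _)
    _ ≤ ‖(i, j, k)‖ * ‖(i, j, k)‖ + ‖(i, j, k)‖ * ‖(i, j, k)‖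
          + 2 * ‖(i, j, k)‖ * ‖(i, j, k)‖ := by
        simp only [abs_mul, abs_two]
        gcongr
    _ = 4 * ‖(i, j, k)‖ ^ 2 := by ring

lemma abs_bccSummand_le {s : ℝ} (hs : -1 ≤ s) (p : ℤ × ℤ × ℤ) :
    |bccSummand s p| ≤ 4 * 3 ^ (s + 1) * ‖p‖ ^ (-(2 * s)) := by
  rcases eq_or_ne p 0 with rfl | hp
  · rw [bccSummand_zero, abs_zero]
    positivity
  set M := ‖p‖
  have hM : 0 < M := norm_pos_iff.mpr hp
  have hQ : M ^ 2 / 3 ≤ bccForm p := by linarith [norm_sq_le_three_mul_bccForm p]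
  have hQ_pos : 0 < bccForm p := lt_of_lt_of_le (by positivity) hQ
  have hpow : M ^ 2 / (M ^ 2 / 3) ^ (s + 1) = 3 ^ (s + 1) * M ^ (-(2 * s)) := by
    rw [Real.div_rpow (by positivity) (by norm_num), ← Real.rpow_natCast_mul hM.le,
      Real.rpow_neg hM.le, show ((2 : ℕ) : ℝ) * (s + 1) = 2 * s + 2 by push_cast; ring,
      Real.rpow_add hM, show (2 : ℝ) = (2 : ℕ) by norm_num, Real.rpow_natCast]
    field_simp
  calc |bccSummand s p| = |(bccNumerator p : ℝ)| / bccForm p ^ (s + 1) := by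
        rw [bccSummand, abs_div, abs_of_pos (Real.rpow_pos_of_pos hQ_pos _)]
    _ ≤ 4 * M ^ 2 / (M ^ 2 / 3) ^ (s + 1) := by
        gcongr
        exacts [abs_bccNumerator_le p, by linarith]
    _ = 4 * 3 ^ (s + 1) * M ^ (-(2 * s)) := by rw [mul_div_assoc, hpow, mul_assoc]

lemma summable_bccSummand {s : ℝ} (hs : 3 / 2 < s) : Summable (bccSummand s) :=
  ((summable_norm_rpow_intTriple (by linarith : 3 < 2 * s)).mul_left (4 * 3 ^ (s + 1)))
    |>.of_norm_bounded fun p ↦ abs_bccSummand_le (by linarith) p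

lemma bccSummand_add_rotate (s : ℝ) (i j k : ℤ) :
    bccSummand s (i, j, k) + bccSummand s (j, k, i) + bccSummand s (k, i, j) = 0 := by
  have hQ₁ : bccForm (j, k, i) = bccForm (i, j, k) := by simp only [bccForm]; ring
  have hQ₂ : bccForm (k, i, j) = bccForm (i, j, k) := by simp only [bccForm]; ring
  have hN :
      (bccNumerator (i, j, k) : ℝ) + bccNumerator (j, k, i) + bccNumerator (k, i, j) = 0 := by
    push_cast [bccNumerator]; ring
  simp only [bccSummand, hQ₁, hQ₂, ← add_div, hN, zero_div]

/-- For every real `s > 3/2`,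
`Σ'_{(i,j,k)≠(0,0,0)} (ij + ik − 2jk)/(i² + j² + k² − (2/3)(ij + ik + jk))^{s+1} = 0`. -/
theorem bcc_odd_sum_vanishes (s : ℝ) (hs : s > 3/2) :
    ∑' p : {p : ℤ × ℤ × ℤ // p ≠ 0},
      ((p.1.1 * p.1.2.1 + p.1.1 * p.1.2.2 - 2 * p.1.2.1 * p.1.2.2 : ℤ) : ℝ) /
        ((p.1.1 : ℝ)^2 + (p.1.2.1 : ℝ)^2 + (p.1.2.2 : ℝ)^2
          - 2/3 * ((p.1.1 : ℝ) * (p.1.2.1 : ℝ) + (p.1.1 : ℝ) * (p.1.2.2 : ℝ)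
            + (p.1.2.1 : ℝ) * (p.1.2.2 : ℝ))) ^ (s + 1) = 0 := by
  change ∑' p : {p : ℤ × ℤ × ℤ // p ≠ 0}, bccSummand s p = 0
  refine (tsum_subtype_eq_of_support_subset (s := {p | p ≠ 0}) fun p hp ↦ ?_).trans ?_
  · rintro rfl
    exact hp (bccSummand_zero s)
  let rotate : Equiv.Perm (ℤ × ℤ × ℤ) := (Equiv.prodComm ℤ (ℤ × ℤ)).trans (Equiv.prodAssoc ℤ ℤ ℤ)
  refine tsum_eq_zero_of_sum_perm_pow_eq_zero (summable_bccSummand hs) rotate three_ne_zero ?_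
  rintro ⟨i, j, k⟩
  simpa [sum_range_succ, pow_succ, rotate] using bccSummand_add_rotate s i j k
end

section
/- Fix a real s > 3/2, and let L(A;s) = Σ'_{i,j,k∈ℤ} g(A;i,j,k)^{-s}. Then the second partial derivative of L(A;s) with respect to A, evaluated at A = 1/2, is strictly positive. -/
/-!
Write `d(p) = (i+j)² - (j+k)² - (i+k)²`, so that `∂_A g(A;p) = d(p)/(A+1)²` and the second
`A`-derivative of `g(A;p)^{-s}` is `s(s+1) d² g^{-s-2}/(A+1)⁴ + 2s d g^{-s-1}/(A+1)³`.
On `1/4 < A < 3/4` one has `g(A;p) ≥ (i²+j²+k²)/7` and `|d(p)| ≤ 5 g(A;p)`, so both derivative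
series are dominated by a multiple of `Σ' (i²+j²+k²)^{-s}`, which converges for `2s > 3`
because `ℤ³` is a lattice of rank 3; hence `L` may be differentiated termwise twice.
At the bcc point `A = 1/2` the form is invariant under the order-3 lattice automorphism
`σ(i,j,k) = (-i-k, j+k, i)`, while `d` sums to zero over every `σ`-orbit. Summing over orbits
therefore cancels the sign-indefinite term and leaves the nonnegative
`s(s+1) g^{-s-2} (d(p)² + d(σp)² + d(σ²p)²)/(3/2)⁴`, which is positive on the orbit of `(0,0,1)`.
-/

open Real Set

theorem deriv_deriv_tsum_of_isPreconnected {ι 𝕜 F : Type*} [NontriviallyNormedField 𝕜]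
    [IsRCLikeNormedField 𝕜] [NormedAddCommGroup F] [NormedSpace 𝕜 F] [CompleteSpace F]
    {f f' f'' : ι → 𝕜 → F} {u v : ι → ℝ} {t : Set 𝕜} (hu : Summable u) (hv : Summable v) (ht : IsOpen t)
    (h't : IsPreconnected t) (hf : ∀ n y, y ∈ t → HasDerivAt (f n) (f' n y) y)
    (hf' : ∀ n y, y ∈ t → HasDerivAt (f' n) (f'' n y) y) (hf'u : ∀ n y, y ∈ t → ‖f' n y‖ ≤ u n)
    (hf''v : ∀ n y, y ∈ t → ‖f'' n y‖ ≤ v n) {y₀ : 𝕜} (hy₀ : y₀ ∈ t)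
    (hf0 : Summable fun n => f n y₀) {y : 𝕜} (hy : y ∈ t) :
    deriv (deriv fun z => ∑' n, f n z) y = ∑' n, f'' n y := by
  have hderiv : deriv (fun z => ∑' n, f n z) =ᶠ[nhds y] fun z => ∑' n, f' n z :=
    Filter.eventually_of_mem (ht.mem_nhds hy) fun z hz =>
      (hasDerivAt_tsum_of_isPreconnected hu ht h't hf hf'u hy₀ hf0 hz).deriv
  rw [hderiv.deriv_eq]
  exact (hasDerivAt_tsum_of_isPreconnected hv ht h't hf' hf''v hy
    (.of_norm_bounded hu fun n => hf'u n y hy) hy).deriv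

lemma tsum_pos_of_orbit_sum_pos {α : Type*} (e : α ≃ α) {f : α → ℝ} (hf : Summable f)
    (hnonneg : ∀ x, 0 ≤ f x + f (e x) + f (e (e x))) {x₀ : α}
    (hpos : 0 < f x₀ + f (e x₀) + f (e (e x₀))) : 0 < ∑' x, f x := by
  have hfe : Summable fun x => f (e x) := e.summable_iff.2 hf
  have hfee : Summable fun x => f (e (e x)) := e.summable_iff.2 hfe
  have horbit : ∑' x, (f x + f (e x) + f (e (e x))) = 3 * ∑' x, f x := by
    rw [(hf.add hfe).tsum_add hfee, hf.tsum_add hfe, e.tsum_eq (fun x => f (e x)), e.tsum_eq]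
    ring
  linarith [((hf.add hfe).add hfee).tsum_pos hnonneg x₀ hpos]

lemma summable_norm_intCast_rpow {ι : Type*} [Fintype ι] {r : ℝ} (hr : r < -Fintype.card ι) :
    Summable fun v : ι → ℤ => ‖WithLp.toLp 2 (fun i => (v i : ℝ))‖ ^ r := by
  let b := (EuclideanSpace.basisFun ι ℝ).toBasis
  let L := Submodule.span ℤ (Set.range b)
  have hmem (v : ι → ℤ) : WithLp.toLp 2 (fun i => (v i : ℝ)) ∈ L := by
    refine (b.mem_span_iff_repr_mem ℤ _).2 fun i => ⟨v i, ?_⟩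
    simp [b]
  have hrank : Module.finrank ℤ L = Fintype.card ι := by
    rw [ZLattice.rank ℝ L]; simp
  have hL : Summable fun z : L => ‖z‖ ^ r :=
    ZLattice.summable_norm_rpow L r (by rw [hrank]; exact hr)
  have hinj : Function.Injective fun v : ι → ℤ => (⟨_, hmem v⟩ : L) := by
    intro v w h
    funext i
    simpa using congrArg (fun z : L => (z : EuclideanSpace ℝ ι).ofLp i) h
  simpa [Function.comp_def] using hL.comp_injective hinj

noncomputable def sqNorm (p : ℤ × ℤ × ℤ) : ℝ :=
  (p.1 : ℝ) ^ 2 + (p.2.1 : ℝ) ^ 2 + (p.2.2 : ℝ) ^ 2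

noncomputable def cuboidalD (p : ℤ × ℤ × ℤ) : ℝ :=
  ((p.1 : ℝ) + p.2.1) ^ 2 - ((p.2.1 : ℝ) + p.2.2) ^ 2 - ((p.1 : ℝ) + p.2.2) ^ 2

lemma summable_sqNorm_rpow_neg {s : ℝ} (hs : 3 / 2 < s) :
    Summable fun p : ℤ × ℤ × ℤ => sqNorm p ^ (-s) := by
  have h := summable_norm_intCast_rpow (ι := Fin 3) (r := 2 * -s) (by simp; linarith)
  have hinj : Function.Injective fun p : ℤ × ℤ × ℤ => ![p.1, p.2.1, p.2.2] := by
    rintro ⟨i, j, k⟩ ⟨i', j', k'⟩ h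
    simp only [Matrix.vecCons_inj, and_true] at h
    simp [h]
  refine (h.comp_injective hinj).congr fun p => ?_
  rw [Function.comp_apply, rpow_mul (norm_nonneg _), rpow_two, EuclideanSpace.real_norm_sq_eq,
    Fin.sum_univ_three]
  simp [sqNorm]

lemma one_le_sqNorm {p : ℤ × ℤ × ℤ} (hp : p ≠ 0) : 1 ≤ sqNorm p := by
  obtain ⟨i, j, k⟩ := p
  have hZ : 1 ≤ i ^ 2 + j ^ 2 + k ^ 2 := by
    by_contra! h
    apply hp
    simp only [Prod.mk_eq_zero]
    refine ⟨?_, ?_, ?_⟩ <;> nlinarith [sq_nonneg i, sq_nonneg j, sq_nonneg k]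
  unfold sqNorm
  exact_mod_cast hZ

section Bounds

variable {A : ℝ} (hA : A ∈ Ioo (1 / 4 : ℝ) (3 / 4)) (p : ℤ × ℤ × ℤ)
include hA

lemma sqNorm_le_seven_mul_cuboidalG : sqNorm p ≤ 7 * cuboidalG A p := by
  obtain ⟨h1, h2⟩ := hA
  unfold cuboidalG sqNorm
  rw [mul_div_assoc', le_div_iff₀ (by linarith)]
  set x := (p.1 : ℝ); set y := (p.2.1 : ℝ); set z := (p.2.2 : ℝ)
  nlinarith [sq_nonneg (x + y + z), mul_nonneg (by linarith : (0:ℝ) ≤ A - 1/4) (sq_nonneg (x + y)),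
    mul_nonneg (by linarith : (0:ℝ) ≤ 3/4 - A) (by positivity : (0:ℝ) ≤ x ^ 2 + y ^ 2 + z ^ 2)]

lemma abs_cuboidalD_le : |cuboidalD p| ≤ 5 * cuboidalG A p := by
  obtain ⟨h1, h2⟩ := hA
  unfold cuboidalG cuboidalD
  rw [abs_le, neg_le, mul_div_assoc', le_div_iff₀ (by linarith), le_div_iff₀ (by linarith)]
  set x := (p.1 : ℝ); set y := (p.2.1 : ℝ); set z := (p.2.2 : ℝ)
  constructor
  · nlinarith [mul_nonneg (by linarith : (0:ℝ) ≤ A - 1/4) (sq_nonneg (x + y)),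
      mul_nonneg (by linarith : (0:ℝ) ≤ 4 - A) (add_nonneg (sq_nonneg (y + z)) (sq_nonneg (x + z))),
      sq_nonneg (x + y)]
  · nlinarith [mul_nonneg (by linarith : (0:ℝ) ≤ A - 1/4) (sq_nonneg (x + y)),
      add_nonneg (sq_nonneg (y + z)) (sq_nonneg (x + z)), sq_nonneg (x + y)]

end Bounds

lemma cuboidalG_pos {A : ℝ} (hA : A ∈ Ioo (1 / 4 : ℝ) (3 / 4)) {p : ℤ × ℤ × ℤ} (hp : p ≠ 0) :
    0 < cuboidalG A p := by
  linarith [one_le_sqNorm hp, sqNorm_le_seven_mul_cuboidalG hA p]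

lemma abs_cuboidalD_div_cuboidalG_le {A : ℝ} (hA : A ∈ Ioo (1 / 4 : ℝ) (3 / 4)) {p : ℤ × ℤ × ℤ}
    (hp : p ≠ 0) : |cuboidalD p / cuboidalG A p| ≤ 5 := by
  have hG := cuboidalG_pos hA hp
  rw [abs_div, abs_of_pos hG, div_le_iff₀ hG]
  exact abs_cuboidalD_le hA p

lemma cuboidalG_rpow_neg_le {A : ℝ} (hA : A ∈ Ioo (1 / 4 : ℝ) (3 / 4)) {p : ℤ × ℤ × ℤ}
    (hp : p ≠ 0) {s : ℝ} (hs : 0 ≤ s) :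
    cuboidalG A p ^ (-s) ≤ 7 ^ s * sqNorm p ^ (-s) := by
  have hN : 0 < sqNorm p := by linarith [one_le_sqNorm hp]
  calc cuboidalG A p ^ (-s) ≤ (7⁻¹ * sqNorm p) ^ (-s) :=
        rpow_le_rpow_of_nonpos (by positivity)
          (by linarith [sqNorm_le_seven_mul_cuboidalG hA p]) (by linarith)
    _ = 7 ^ s * sqNorm p ^ (-s) := by
        rw [mul_rpow (by norm_num) hN.le, inv_rpow (by norm_num), ← rpow_neg (by norm_num), neg_neg]

noncomputable def epsteinTermDeriv (s : ℝ) (p : ℤ × ℤ × ℤ) (A : ℝ) : ℝ :=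
  -s * cuboidalD p * cuboidalG A p ^ (-s - 1) / (A + 1) ^ 2

noncomputable def epsteinTermDeriv2 (s : ℝ) (p : ℤ × ℤ × ℤ) (A : ℝ) : ℝ :=
  s * (s + 1) * cuboidalD p ^ 2 * cuboidalG A p ^ (-s - 2) / (A + 1) ^ 4 +
    2 * s * cuboidalD p * cuboidalG A p ^ (-s - 1) / (A + 1) ^ 3

section Derivatives

variable (s : ℝ) (p : ℤ × ℤ × ℤ) {A : ℝ} (hA : A + 1 ≠ 0)
include hA

lemma hasDerivAt_cuboidalG : HasDerivAt (fun A => cuboidalG A p) (cuboidalD p / (A + 1) ^ 2) A := by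
  have hnum := (((hasDerivAt_id' A).mul_const (((p.1 : ℝ) + p.2.1) ^ 2)).add_const
    (((p.2.1 : ℝ) + p.2.2) ^ 2)).add_const (((p.1 : ℝ) + p.2.2) ^ 2)
  refine (hnum.div ((hasDerivAt_id' A).add_const 1) hA).congr_deriv ?_
  unfold cuboidalD
  field_simp
  ring

variable (hG : cuboidalG A p ≠ 0)
include hG

lemma hasDerivAt_cuboidalG_rpow :
    HasDerivAt (fun A => cuboidalG A p ^ (-s)) (epsteinTermDeriv s p A) A := by
  convert (hasDerivAt_cuboidalG p hA).rpow_const (p := -s) (Or.inl hG) using 1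
  unfold epsteinTermDeriv
  ring

lemma hasDerivAt_epsteinTermDeriv :
    HasDerivAt (epsteinTermDeriv s p) (epsteinTermDeriv2 s p A) A := by
  have hfun : epsteinTermDeriv s p =
      fun B => -s * cuboidalD p * (cuboidalG B p ^ (-s - 1) / (B + 1) ^ 2) := by
    funext B
    unfold epsteinTermDeriv
    ring
  rw [hfun]
  refine ((((hasDerivAt_cuboidalG p hA).rpow_const (p := -s - 1) (Or.inl hG)).div
    (((hasDerivAt_id' A).add_const 1).fun_pow 2) (pow_ne_zero 2 hA)).const_mul
      (-s * cuboidalD p)).congr_deriv ?_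
  unfold epsteinTermDeriv2
  rw [show -s - 1 - 1 = -s - 2 by ring]
  field_simp
  ring

end Derivatives

section TermBounds

variable {s : ℝ} (hs : 0 ≤ s) {A : ℝ} (hA : A ∈ Ioo (1 / 4 : ℝ) (3 / 4)) {p : ℤ × ℤ × ℤ}
  (hp : p ≠ 0)
include hs hA hp

lemma abs_epsteinTermDeriv_le : |epsteinTermDeriv s p A| ≤ 5 * s * cuboidalG A p ^ (-s) := by
  have hG := cuboidalG_pos hA hp
  have hr := abs_cuboidalD_div_cuboidalG_le hA hp
  have hA1 : 1 ≤ (A + 1) ^ 2 := one_le_pow₀ (by linarith [hA.1])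
  have hform : epsteinTermDeriv s p A =
      -(s * (cuboidalD p / cuboidalG A p) / (A + 1) ^ 2) * cuboidalG A p ^ (-s) := by
    unfold epsteinTermDeriv
    rw [rpow_sub_one hG.ne']
    field_simp
  rw [hform, abs_mul, abs_neg, abs_div, abs_mul, abs_of_nonneg hs,
    abs_of_pos (by linarith : (0 : ℝ) < (A + 1) ^ 2), abs_of_nonneg (rpow_nonneg hG.le _)]
  gcongr ?_ * _
  calc s * |cuboidalD p / cuboidalG A p| / (A + 1) ^ 2
      ≤ s * |cuboidalD p / cuboidalG A p| := div_le_self (by positivity) hA1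
    _ ≤ 5 * s := by rw [mul_comm]; gcongr

lemma abs_epsteinTermDeriv2_le :
    |epsteinTermDeriv2 s p A| ≤ (25 * s * (s + 1) + 10 * s) * cuboidalG A p ^ (-s) := by
  have hG := cuboidalG_pos hA hp
  have hr := abs_cuboidalD_div_cuboidalG_le hA hp
  set r := cuboidalD p / cuboidalG A p with hr_def
  have hr2 : r ^ 2 ≤ 25 := by nlinarith [abs_le.1 hr]
  have hA3 : 1 ≤ (A + 1) ^ 3 := one_le_pow₀ (by linarith [hA.1])
  have hA4 : 1 ≤ (A + 1) ^ 4 := one_le_pow₀ (by linarith [hA.1])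
  have hform : epsteinTermDeriv2 s p A =
      (s * (s + 1) * r ^ 2 / (A + 1) ^ 4 + 2 * s * r / (A + 1) ^ 3) * cuboidalG A p ^ (-s) := by
    unfold epsteinTermDeriv2
    rw [rpow_sub_one hG.ne', rpow_sub hG, rpow_two, hr_def]
    field_simp
  rw [hform, abs_mul, abs_of_nonneg (rpow_nonneg hG.le _)]
  gcongr ?_ * _
  have hss : 0 ≤ s * (s + 1) := mul_nonneg hs (by linarith)
  calc |s * (s + 1) * r ^ 2 / (A + 1) ^ 4 + 2 * s * r / (A + 1) ^ 3|
      ≤ |s * (s + 1) * r ^ 2 / (A + 1) ^ 4| + |2 * s * r / (A + 1) ^ 3| := abs_add_le _ _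
    _ ≤ s * (s + 1) * r ^ 2 + 2 * s * |r| := by
        rw [abs_div, abs_div, abs_of_pos (by linarith : (0 : ℝ) < (A + 1) ^ 4),
          abs_of_pos (by linarith : (0 : ℝ) < (A + 1) ^ 3),
          abs_of_nonneg (mul_nonneg hss (sq_nonneg r)), abs_mul (2 * s),
          abs_of_nonneg (by linarith : 0 ≤ 2 * s)]
        exact add_le_add (div_le_self (by positivity) hA4) (div_le_self (by positivity) hA3)
    _ ≤ 25 * s * (s + 1) + 10 * s := by nlinarith

end TermBounds

lemma summable_epsteinMajorant {s : ℝ} (hs : 3 / 2 < s) :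
    Summable fun p : {p : ℤ × ℤ × ℤ // p ≠ 0} => 7 ^ s * sqNorm p ^ (-s) :=
  ((summable_sqNorm_rpow_neg hs).subtype _).mul_left _

lemma deriv_deriv_epsteinL {s : ℝ} (hs : 3 / 2 < s) {A : ℝ} (hA : A ∈ Ioo (1 / 4 : ℝ) (3 / 4)) :
    deriv (deriv fun A => epsteinL A s) A =
      ∑' p : {p : ℤ × ℤ × ℤ // p ≠ 0}, epsteinTermDeriv2 s p A := by
  have hs0 : 0 ≤ s := by linarith
  have hmaj := summable_epsteinMajorant hs
  have hle (p : {p : ℤ × ℤ × ℤ // p ≠ 0}) {B : ℝ} (hB : B ∈ Ioo (1 / 4 : ℝ) (3 / 4)) {c : ℝ}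
      (hc : 0 ≤ c) : c * cuboidalG B p ^ (-s) ≤ c * (7 ^ s * sqNorm p ^ (-s)) :=
    mul_le_mul_of_nonneg_left (cuboidalG_rpow_neg_le hB p.2 hs0) hc
  have hB1 {B : ℝ} (hB : B ∈ Ioo (1 / 4 : ℝ) (3 / 4)) : B + 1 ≠ 0 := by linarith [hB.1]
  exact deriv_deriv_tsum_of_isPreconnected (f := fun p B => cuboidalG B p.1 ^ (-s))
    (hmaj.mul_left (5 * s)) (hmaj.mul_left (25 * s * (s + 1) + 10 * s))
    isOpen_Ioo isPreconnected_Ioo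
    (fun p B hB => hasDerivAt_cuboidalG_rpow s p (hB1 hB) (cuboidalG_pos hB p.2).ne')
    (fun p B hB => hasDerivAt_epsteinTermDeriv s p (hB1 hB) (cuboidalG_pos hB p.2).ne')
    (fun p B hB => (abs_epsteinTermDeriv_le hs0 hB p.2).trans (hle p hB (by positivity)))
    (fun p B hB => (abs_epsteinTermDeriv2_le hs0 hB p.2).trans (hle p hB (by positivity))) hA
    (.of_norm_bounded hmaj fun p => by
      rw [norm_of_nonneg (rpow_nonneg (cuboidalG_pos hA p.2).le _)]
      exact cuboidalG_rpow_neg_le hA p.2 hs0)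
    hA

lemma summable_epsteinTermDeriv2 {s : ℝ} (hs : 3 / 2 < s) {A : ℝ}
    (hA : A ∈ Ioo (1 / 4 : ℝ) (3 / 4)) :
    Summable fun p : {p : ℤ × ℤ × ℤ // p ≠ 0} => epsteinTermDeriv2 s p A :=
  .of_norm_bounded ((summable_epsteinMajorant hs).mul_left _) fun p =>
    (abs_epsteinTermDeriv2_le (by linarith) hA p.2).trans
      (mul_le_mul_of_nonneg_left (cuboidalG_rpow_neg_le hA p.2 (by linarith)) (by positivity))

def cuboidalRot : (ℤ × ℤ × ℤ) ≃+ (ℤ × ℤ × ℤ) where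
  toFun p := (-p.1 - p.2.2, p.2.1 + p.2.2, p.1)
  invFun p := (p.2.2, p.1 + p.2.1 + p.2.2, -p.1 - p.2.2)
  left_inv := by rintro ⟨i, j, k⟩; ext <;> simp
  right_inv := by rintro ⟨i, j, k⟩; ext <;> simp; ring
  map_add' := by rintro ⟨i, j, k⟩ ⟨i', j', k'⟩; ext <;> simp <;> ring

def cuboidalRotNeZero : {p : ℤ × ℤ × ℤ // p ≠ 0} ≃ {p : ℤ × ℤ × ℤ // p ≠ 0} :=
  cuboidalRot.toEquiv.subtypeEquiv fun _ => (map_ne_zero_iff cuboidalRot cuboidalRot.injective).symm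

lemma coe_cuboidalRotNeZero (p : {p : ℤ × ℤ × ℤ // p ≠ 0}) :
    (cuboidalRotNeZero p : ℤ × ℤ × ℤ) = cuboidalRot p :=
  rfl

lemma cuboidalG_half_cuboidalRot (p : ℤ × ℤ × ℤ) :
    cuboidalG (1 / 2) (cuboidalRot p) = cuboidalG (1 / 2) p := by
  simp only [cuboidalG, cuboidalRot, AddEquiv.coe_mk, Equiv.coe_fn_mk]
  push_cast
  ring

lemma cuboidalD_orbit_sum (p : ℤ × ℤ × ℤ) :
    cuboidalD p + cuboidalD (cuboidalRot p) + cuboidalD (cuboidalRot (cuboidalRot p)) = 0 := by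
  simp only [cuboidalD, cuboidalRot, AddEquiv.coe_mk, Equiv.coe_fn_mk]
  push_cast
  ring

lemma epsteinTermDeriv2_half_orbit_sum (s : ℝ) (p : ℤ × ℤ × ℤ) :
    epsteinTermDeriv2 s p (1 / 2) + epsteinTermDeriv2 s (cuboidalRot p) (1 / 2) +
        epsteinTermDeriv2 s (cuboidalRot (cuboidalRot p)) (1 / 2) =
      s * (s + 1) * (cuboidalD p ^ 2 + cuboidalD (cuboidalRot p) ^ 2 +
        cuboidalD (cuboidalRot (cuboidalRot p)) ^ 2) * cuboidalG (1 / 2) p ^ (-s - 2) /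
          (3 / 2) ^ 4 := by
  unfold epsteinTermDeriv2
  rw [cuboidalG_half_cuboidalRot, cuboidalG_half_cuboidalRot, cuboidalG_half_cuboidalRot]
  linear_combination
    (2 * s * cuboidalG (1 / 2) p ^ (-s - 1) / (1 / 2 + 1) ^ 3) * cuboidalD_orbit_sum p

/-- For fixed real `s > 3/2`, the second partial derivative of `L(A;s)`
with respect to `A`, evaluated at `A = 1/2`, is strictly positive. -/
theorem epsteinL_second_deriv_at_half_pos (s : ℝ) (hs : s > 3/2) :
    0 < deriv (deriv (fun A : ℝ => epsteinL A s)) (1/2) := by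
  have hhalf : (1 / 2 : ℝ) ∈ Ioo (1 / 4 : ℝ) (3 / 4) := by norm_num
  rw [deriv_deriv_epsteinL hs hhalf]
  refine tsum_pos_of_orbit_sum_pos cuboidalRotNeZero (summable_epsteinTermDeriv2 hs hhalf)
    (x₀ := ⟨(0, 0, 1), by decide⟩) (fun p => ?_) ?_ <;>
    simp only [coe_cuboidalRotNeZero, epsteinTermDeriv2_half_orbit_sum]
  · have := rpow_nonneg (cuboidalG_pos hhalf p.2).le (-s - 2)
    positivity
  · have := rpow_pos_of_pos (cuboidalG_pos hhalf (p := (0, 0, 1)) (by decide)) (-s - 2)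
    have hD : cuboidalD (0, 0, 1) = -2 := by norm_num [cuboidalD]
    rw [hD]
    positivity
end
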